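/- With χ(x) = x^{1/2 + δ·cos(ln(x+1))} for fixed α > 0 and δ ∈ (0, 1/2), the Karamata-type asymptotic holds: ∫_x^∞ e^{−α y − χ(y)} dy ~ α^{−1} e^{−α x − χ(x)} as x → ∞, i.e., α e^{α x + χ(x)} ∫_x^∞ e^{−α y − χ(y)} dy → 1. -/

import Mathlib

open MeasureTheory Filter Set

noncomputable section

/-- `χ(x) = x^{1/2 + δ·cos(ln(x+1))}` (real power). -/
def chiFn (δ : ℝ) (x : ℝ) : ℝ := x ^ ((1:ℝ)/2 + δ * Real.cos (Real.log (x + 1)))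

/-- The normalizing constant `a = (∫₀^∞ e^{-χ(y)} dy)⁻¹`. -/
def clineA (δ : ℝ) : ℝ := (∫ y in Set.Ioi (0:ℝ), Real.exp (-chiFn δ y))⁻¹

/-- The Cline-type density `f(x) = a e^{-χ(x)}` for `x ≥ 0`, `0` for `x < 0`. -/
def clineF (δ : ℝ) (x : ℝ) : ℝ :=
  if x < 0 then 0 else clineA δ * Real.exp (-chiFn δ x)

/-- The long-tailed density class `𝓛₀`. -/
def LongTailedDensity (f : ℝ → ℝ) : Prop :=
  (∀ᶠ x in atTop, 0 < f x) ∧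
  ∀ t : ℝ, Tendsto (fun x => f (x + t) / f x) atTop (nhds 1)

/-! The exponent `χ` has derivative `O(x^{δ-1/2} log x) → 0`, so for every `ε > 0` it is
eventually `ε`-Lipschitz. Substituting `y = x + t`, the quantity becomes
`α ∫₀^∞ exp (-α t - (χ (x + t) - χ x)) dt`; the correction `χ (x + t) - χ x` tends to `0` for
each `t` and is eventually at most `α t / 2`, so dominated convergence gives `α · α⁻¹ = 1`. -/

open Real Topology

theorem integral_Ioi_eq_integral_Ioi_zero_comp_add_right {E : Type*} [NormedAddCommGroup E]
    [NormedSpace ℝ E] (f : ℝ → E) (x : ℝ) :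
    ∫ y in Ioi x, f y = ∫ t in Ioi 0, f (t + x) := by
  have := (measurePreserving_add_right volume x).setIntegral_preimage_emb
    (measurableEmbedding_addRight x) f (Ioi x)
  simpa [preimage_add_const_Ioi] using this.symm

section TendstoDerivZero

variable {φ φ' : ℝ → ℝ}

theorem eventually_abs_sub_le_of_tendsto_deriv (hφ : ∀ᶠ x in atTop, HasDerivAt φ (φ' x) x)
    (hφ' : Tendsto φ' atTop (𝓝 0)) {ε : ℝ} (hε : 0 < ε) :
    ∀ᶠ x in atTop, ∀ t, 0 ≤ t → |φ (t + x) - φ x| ≤ ε * t := by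
  obtain ⟨X, hX⟩ := eventually_atTop.1
    (hφ.and (hφ'.eventually (Metric.closedBall_mem_nhds 0 hε)))
  filter_upwards [eventually_ge_atTop X] with x hx t ht
  have := (convex_Ici X).norm_image_sub_le_of_norm_hasDerivWithin_le
    (fun z hz => (hX z hz).1.hasDerivWithinAt)
    (fun z hz => by simpa using (hX z hz).2) (mem_Ici.2 hx)
    (show t + x ∈ Ici X from mem_Ici.2 (by linarith))
  simpa [Real.norm_eq_abs, abs_of_nonneg ht] using this

theorem tendsto_sub_comp_add_of_tendsto_deriv (hφ : ∀ᶠ x in atTop, HasDerivAt φ (φ' x) x)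
    (hφ' : Tendsto φ' atTop (𝓝 0)) {t : ℝ} (ht : 0 ≤ t) :
    Tendsto (fun x => φ (t + x) - φ x) atTop (𝓝 0) := by
  refine Metric.tendsto_nhds.2 fun ε hε => ?_
  filter_upwards [eventually_abs_sub_le_of_tendsto_deriv hφ hφ'
    (div_pos hε (by linarith : (0:ℝ) < t + 1))] with x hx
  calc dist (φ (t + x) - φ x) 0 ≤ ε / (t + 1) * t := by simpa using hx t ht
    _ < ε := by rw [div_mul_eq_mul_div, div_lt_iff₀ (by linarith)]; nlinarith

theorem tendsto_mul_exp_mul_integral_Ioi_of_tendsto_deriv {α : ℝ} (hα : 0 < α)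
    (hφ : ∀ᶠ x in atTop, HasDerivAt φ (φ' x) x) (hφ' : Tendsto φ' atTop (𝓝 0)) :
    Tendsto (fun x => α * exp (α * x + φ x) * ∫ y in Ioi x, exp (-(α * y) - φ y))
      atTop (𝓝 1) := by
  have hshift : ∀ x, α * exp (α * x + φ x) * ∫ y in Ioi x, exp (-(α * y) - φ y) =
      α * ∫ t in Ioi 0, exp (-α * t - (φ (t + x) - φ x)) := by
    intro x
    rw [integral_Ioi_eq_integral_Ioi_zero_comp_add_right, mul_assoc, ← integral_const_mul]
    congr 2 with t
    rw [← exp_add]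
    ring_nf
  have hlim : Tendsto (fun x => ∫ t in Ioi 0, exp (-α * t - (φ (t + x) - φ x))) atTop
      (𝓝 (∫ t in Ioi 0, exp (-α * t))) := by
    obtain ⟨X, hX⟩ := eventually_atTop.1 hφ
    refine tendsto_integral_filter_of_dominated_convergence (fun t => exp (-α / 2 * t)) ?_ ?_
      (integrableOn_exp_mul_Ioi (by linarith) 0) ?_
    · filter_upwards [eventually_ge_atTop X] with x hx
      refine ContinuousOn.aestronglyMeasurable (fun t (ht : 0 < t) => ?_) measurableSet_Ioi
      have hφt : ContinuousAt (fun t => φ (t + x)) t :=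
        (hX (t + x) (by linarith)).continuousAt.comp (x := t) (by fun_prop)
      exact ((continuousAt_const.mul continuousAt_id).sub (hφt.sub continuousAt_const)).rexp
        |>.continuousWithinAt
    · filter_upwards [eventually_abs_sub_le_of_tendsto_deriv hφ hφ' (half_pos hα)] with x hx
      refine (ae_restrict_iff' measurableSet_Ioi).2 (ae_of_all _ fun t (ht : 0 < t) => ?_)
      rw [norm_of_nonneg (exp_pos _).le, exp_le_exp]
      linarith [(abs_le.1 (hx t ht.le)).1]
    · refine (ae_restrict_iff' measurableSet_Ioi).2 (ae_of_all _ fun t (ht : 0 < t) => ?_)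
      simpa using ((tendsto_sub_comp_add_of_tendsto_deriv hφ hφ' ht.le).const_sub
        (-α * t)).rexp
  rw [integral_exp_mul_Ioi (by linarith) 0] at hlim
  simpa [hshift, hα.ne'] using hlim.const_mul α

end TendstoDerivZero

section Chi

variable {δ x : ℝ}

def chiExponent (δ x : ℝ) : ℝ := 1 / 2 + δ * cos (log (x + 1))

/-- `χ' = x^(g - 1) (g + x g' log x)` for `g = chiExponent δ`, factored so that `x^(g - 1)`, which
is at most `x^(δ - 1/2)`, carries all the decay. -/
def chiDeriv (δ x : ℝ) : ℝ :=
  x ^ (chiExponent δ x - 1) *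
    (chiExponent δ x - δ * sin (log (x + 1)) * (x / (x + 1)) * log x)

theorem hasDerivAt_chiExponent (hx : x + 1 ≠ 0) :
    HasDerivAt (chiExponent δ) (-(δ * sin (log (x + 1)) / (x + 1))) x := by
  have hlog : HasDerivAt (fun y => log (y + 1)) (1 / (x + 1)) x := by
    simpa using ((hasDerivAt_id x).add_const 1).log hx
  exact (((hlog.cos).const_mul δ).const_add (1 / 2)).congr_deriv (by ring)

theorem hasDerivAt_chiFn (hx : 0 < x) : HasDerivAt (chiFn δ) (chiDeriv δ x) x := by
  have hsplit : x ^ chiExponent δ x = x ^ (chiExponent δ x - 1) * x := by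
    rw [← rpow_add_one hx.ne', sub_add_cancel]
  refine ((hasDerivAt_id x).rpow (hasDerivAt_chiExponent (by linarith)) hx).congr_deriv ?_
  simp only [chiDeriv, id, hsplit]
  field_simp
  ring

theorem abs_chiDeriv_le (hδ0 : 0 < δ) (hδ : δ < 1 / 2) (hx : 1 ≤ x) :
    |chiDeriv δ x| ≤ x ^ (δ - 1 / 2) * (1 + log x) := by
  have hx0 : 0 < x := by linarith
  have hcos := abs_le.1 (abs_cos_le_one (log (x + 1)))
  have hg : |chiExponent δ x| ≤ 1 := by
    rw [chiExponent, abs_le]; exact ⟨by nlinarith, by nlinarith⟩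
  have hg' : |δ * sin (log (x + 1)) * (x / (x + 1))| ≤ 1 := by
    rw [abs_mul, abs_mul, abs_of_pos hδ0, abs_of_pos (by positivity : 0 < x / (x + 1))]
    have hfrac : x / (x + 1) ≤ 1 := (div_le_one (by linarith)).2 (by linarith)
    calc δ * |sin (log (x + 1))| * (x / (x + 1)) ≤ 1 * 1 * 1 := by
          gcongr
          · linarith
          · exact abs_sin_le_one _
      _ = 1 := by norm_num
  have hpow : x ^ (chiExponent δ x - 1) ≤ x ^ (δ - 1 / 2) :=
    rpow_le_rpow_of_exponent_le hx (by rw [chiExponent]; nlinarith)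
  have hlog := log_nonneg hx
  rw [chiDeriv, abs_mul, abs_of_pos (rpow_pos_of_pos hx0 _)]
  gcongr
  calc |chiExponent δ x - δ * sin (log (x + 1)) * (x / (x + 1)) * log x|
      ≤ |chiExponent δ x| + |δ * sin (log (x + 1)) * (x / (x + 1))| * log x :=
        (abs_sub _ _).trans_eq (by rw [abs_mul _ (log x), abs_of_nonneg hlog])
    _ ≤ 1 + 1 * log x := by gcongr
    _ = 1 + log x := by ring

theorem tendsto_chiDeriv_atTop (hδ0 : 0 < δ) (hδ : δ < 1 / 2) :
    Tendsto (chiDeriv δ) atTop (𝓝 0) := by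
  have hr : 0 < 1 / 2 - δ := by linarith
  have hpow : Tendsto (fun x : ℝ => x ^ (δ - 1 / 2)) atTop (𝓝 0) := by
    simpa using tendsto_rpow_neg_atTop hr
  have hlog : Tendsto (fun x : ℝ => x ^ (δ - 1 / 2) * log x) atTop (𝓝 0) := by
    refine (isLittleO_log_rpow_atTop hr).tendsto_div_nhds_zero.congr' ?_
    filter_upwards [eventually_gt_atTop 0] with x hx
    rw [div_eq_mul_inv, ← rpow_neg hx.le, neg_sub, mul_comm]
  have hbound := (hpow.add hlog).congr fun x => (mul_one_add _ _).symm
  rw [add_zero] at hbound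
  refine squeeze_zero_norm' ?_ hbound
  filter_upwards [eventually_ge_atTop 1] with x hx
  exact abs_chiDeriv_le hδ0 hδ hx

end Chi

theorem cline_karamata_asymptotic (α δ : ℝ) (hα : 0 < α) (hδ0 : 0 < δ)
    (hδ : δ < 1/2) :
    Tendsto (fun x : ℝ =>
        α * Real.exp (α * x + chiFn δ x) *
          ∫ y in Set.Ioi x, Real.exp (-(α * y) - chiFn δ y)) atTop (nhds 1) :=
  tendsto_mul_exp_mul_integral_Ioi_of_tendsto_deriv hα
    ((eventually_gt_atTop 0).mono fun _ hx => hasDerivAt_chiFn hx)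
    (tendsto_chiDeriv_atTop hδ0 hδ)
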